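/- arXiv:1509.02811 — 5 statements merged into one kernel-verified Lean document; each statement's English description precedes it below -/
import Mathlib

section
/- Let N ≥ 2, let λ0 > 0, λ1 > 0 and a0 > 0, a1 > 0, and let y ∈ ℝ^N. For a > 0 let φ(x; a) = (1/a)·log(1 + a·|x|) be the logarithmic penalty. If a0·λ0 + 4·a1·λ1 ≤ 1, then the function F : ℝ^N → ℝ defined by F(x) = (1/2)‖y − x‖₂² + λ0·Σ_{n=1}^{N} φ(x_n; a0) + λ1·Σ_{n=1}^{N−1} φ((Dx)_n; a1) is strictly convex. -/
/-!
Adding `a t² / 2` to the penalty `φ(t; a)` makes it convex: on `t ≥ 0` the derivative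
`1 / (1 + a t) + a t` is increasing, and the result is even and increasing in `|t|`.
Borrowing these compensating squares from the data term leaves the quadratic form
`Q x = ½ (1 - a₀λ₀) ‖x‖² - ½ a₁λ₁ ‖D x‖²`, so the objective is `Q` plus an affine function plus
a convex function. `Q` is positive definite because `‖D x‖² < 4 ‖x‖²` for `x ≠ 0` and
`4 a₁λ₁ ≤ 1 - a₀λ₀`, and a positive definite quadratic form is strictly convex.
-/

open Set

theorem ConvexOn.finset_sum {𝕜 E β ι : Type*} [Semiring 𝕜] [PartialOrder 𝕜]
    [AddCommMonoid E] [SMul 𝕜 E] [AddCommMonoid β] [PartialOrder β] [IsOrderedAddMonoid β]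
    [Module 𝕜 β] {s : Set E} (hs : Convex 𝕜 s) (t : Finset ι) {f : ι → E → β}
    (hf : ∀ i ∈ t, ConvexOn 𝕜 s (f i)) : ConvexOn 𝕜 s fun x => ∑ i ∈ t, f i x := by
  classical
  induction t using Finset.induction_on with
  | empty => simpa using convexOn_const 0 hs
  | insert i t hi ih =>
    simp only [Finset.sum_insert hi]
    exact (hf i (Finset.mem_insert_self i t)).add
      (ih fun j hj => hf j (Finset.mem_insert_of_mem hj))

theorem convexOn_univ_sum_comp_linearMap {𝕜 E F β ι : Type*} [Semiring 𝕜] [PartialOrder 𝕜]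
    [AddCommMonoid E] [Module 𝕜 E] [AddCommMonoid F] [Module 𝕜 F] [AddCommMonoid β]
    [PartialOrder β] [IsOrderedAddMonoid β] [Module 𝕜 β] (t : Finset ι) {g : ι → F → β}
    (hg : ∀ i ∈ t, ConvexOn 𝕜 univ (g i)) (ℓ : ι → E →ₗ[𝕜] F) :
    ConvexOn 𝕜 univ fun x => ∑ i ∈ t, g i (ℓ i x) :=
  ConvexOn.finset_sum convex_univ t fun i hi => (hg i hi).comp_linearMap (ℓ i)

theorem convexOn_const_sub_mul {𝕜 : Type*} [CommRing 𝕜] [PartialOrder 𝕜] (c d : 𝕜) :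
    ConvexOn 𝕜 univ fun t => c - d * t :=
  ⟨convex_univ, fun s _ t _ a b _ _ hab => le_of_eq <| by
    simp only [smul_eq_mul]
    linear_combination -c * hab⟩

theorem QuadraticMap.PosDef.strictConvexOn {𝕜 E : Type*} [Field 𝕜] [LinearOrder 𝕜]
    [IsStrictOrderedRing 𝕜] [AddCommGroup E] [Module 𝕜 E] {Q : QuadraticForm 𝕜 E}
    (hQ : Q.PosDef) : StrictConvexOn 𝕜 univ Q := by
  refine ⟨convex_univ, fun x _ z _ hxz a b ha hb hab => ?_⟩
  have hsub : Q (x - z) = Q x + Q z - polar Q x z := by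
    rw [sub_eq_add_neg, QuadraticMap.map_add Q, QuadraticMap.map_neg,
      QuadraticMap.polar_neg_right]
    ring
  have hcombo : Q (a • x + b • z) = a * Q x + b * Q z - a * b * Q (x - z) := by
    rw [QuadraticMap.map_add Q, QuadraticMap.map_smul, QuadraticMap.map_smul,
      QuadraticMap.polar_smul_left, QuadraticMap.polar_smul_right, hsub,
      eq_sub_of_add_eq' hab]
    simp only [smul_eq_mul]
    ring
  rw [hcombo, smul_eq_mul, smul_eq_mul]
  nlinarith [mul_pos (mul_pos ha hb) (hQ _ (sub_ne_zero.mpr hxz))]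

section LogPenalty

variable {a : ℝ}

noncomputable def logPenalty (a t : ℝ) : ℝ := 1 / a * Real.log (1 + a * |t|)

theorem hasDerivAt_log_one_add_mul_add_sq (ha : a ≠ 0) {u : ℝ} (hu : 0 < 1 + a * u) :
    HasDerivAt (fun u => 1 / a * Real.log (1 + a * u) + a / 2 * u ^ 2)
      (1 / (1 + a * u) + a * u) u := by
  have hlin : HasDerivAt (fun u => 1 + a * u) a u := by
    simpa using ((hasDerivAt_id u).const_mul a).const_add 1
  refine (((hlin.log hu.ne').const_mul (1 / a)).add
    ((hasDerivAt_pow 2 u).const_mul (a / 2))).congr_deriv ?_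
  field_simp
  ring

theorem monotoneOn_one_div_one_add_mul_add_mul (ha : 0 ≤ a) :
    MonotoneOn (fun u => 1 / (1 + a * u) + a * u) (Ici 0) := by
  intro u (hu : 0 ≤ u) v (hv : 0 ≤ v) huv
  have hu1 : 1 ≤ 1 + a * u := by nlinarith
  have hv1 : 1 ≤ 1 + a * v := by nlinarith
  -- `1/(1+au) - 1/(1+av) = a(v-u)/((1+au)(1+av)) ≤ a(v-u)`
  have key : 1 / (1 + a * u) - 1 / (1 + a * v) ≤ a * v - a * u := by
    rw [div_sub_div _ _ (by positivity) (by positivity), div_le_iff₀ (by positivity)]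
    nlinarith [mul_nonneg ha (sub_nonneg.mpr huv), mul_le_mul hu1 hv1 zero_le_one (by positivity)]
  dsimp only
  linarith

theorem convexOn_log_one_add_mul_add_sq (ha : 0 < a) :
    ConvexOn ℝ (Ici 0) fun u => 1 / a * Real.log (1 + a * u) + a / 2 * u ^ 2 := by
  have hderiv : ∀ u ∈ Ici (0 : ℝ), HasDerivAt
      (fun u => 1 / a * Real.log (1 + a * u) + a / 2 * u ^ 2) (1 / (1 + a * u) + a * u) u :=
    fun u (hu : 0 ≤ u) => hasDerivAt_log_one_add_mul_add_sq ha.ne' (by positivity)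
  refine MonotoneOn.convexOn_of_deriv (convex_Ici 0)
    (fun u hu => (hderiv u hu).continuousAt.continuousWithinAt)
    (fun u hu => (hderiv u (interior_subset hu)).differentiableAt.differentiableWithinAt) ?_
  exact ((monotoneOn_one_div_one_add_mul_add_mul ha.le).mono interior_subset).congr
    fun u hu => (hderiv u (interior_subset hu)).deriv.symm

theorem monotoneOn_log_one_add_mul_add_sq (ha : 0 ≤ a) :
    MonotoneOn (fun u => 1 / a * Real.log (1 + a * u) + a / 2 * u ^ 2) (Ici 0) := by
  intro u (hu : 0 ≤ u) v (hv : 0 ≤ v) huv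
  have hlog : Real.log (1 + a * u) ≤ Real.log (1 + a * v) :=
    Real.log_le_log (by positivity) (by gcongr)
  dsimp only
  gcongr

theorem convexOn_logPenalty_add_sq (ha : 0 < a) :
    ConvexOn ℝ univ fun t => logPenalty a t + a / 2 * t ^ 2 := by
  have himage : (fun t : ℝ => |t|) '' univ = Ici 0 := by
    ext u
    exact ⟨by rintro ⟨t, -, rfl⟩; exact abs_nonneg t, fun hu => ⟨u, trivial, abs_of_nonneg hu⟩⟩
  have hcomp := ConvexOn.comp (g := fun u => 1 / a * Real.log (1 + a * u) + a / 2 * u ^ 2)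
    (himage ▸ convexOn_log_one_add_mul_add_sq ha) (convexOn_univ_norm (E := ℝ))
    (himage ▸ monotoneOn_log_one_add_mul_add_sq ha.le)
  simpa [Function.comp_def, logPenalty, sq_abs] using hcomp

end LogPenalty

section FirstDiff

variable (R : Type*) [CommRing R] (N : ℕ)

def firstDiff : (Fin (N + 1) → R) →ₗ[R] (Fin N → R) :=
  LinearMap.funLeft R R Fin.succ - LinearMap.funLeft R R Fin.castSucc

variable {R N}

@[simp]
theorem firstDiff_apply (x : Fin (N + 1) → R) (i : Fin N) :
    firstDiff R N x i = x i.succ - x i.castSucc :=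
  rfl

-- `(p - q)² + (p + q)² = 2p² + 2q²`, summed over consecutive pairs
theorem sum_sq_firstDiff_add (v : Fin (N + 1) → R) :
    ∑ i, firstDiff R N v i ^ 2 + (∑ i : Fin N, (v i.succ + v i.castSucc) ^ 2
      + 2 * v 0 ^ 2 + 2 * v (Fin.last N) ^ 2) = 4 * ∑ n, v n ^ 2 := by
  have hsucc := Fin.sum_univ_succ fun n => v n ^ 2
  have hcastSucc := Fin.sum_univ_castSucc fun n => v n ^ 2
  have hpairs : ∑ i, firstDiff R N v i ^ 2 + ∑ i : Fin N, (v i.succ + v i.castSucc) ^ 2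
      = 2 * ∑ i : Fin N, v i.succ ^ 2 + 2 * ∑ i : Fin N, v i.castSucc ^ 2 := by
    simp only [firstDiff_apply, Finset.mul_sum, ← Finset.sum_add_distrib]
    exact Finset.sum_congr rfl fun i _ => by ring
  linear_combination hpairs - 2 * hsucc - 2 * hcastSucc

variable [LinearOrder R] [IsStrictOrderedRing R]

theorem sum_sq_firstDiff_lt {v : Fin (N + 1) → R} (hv : v ≠ 0) :
    ∑ i, firstDiff R N v i ^ 2 < 4 * ∑ n, v n ^ 2 := by
  rw [← sum_sq_firstDiff_add v, lt_add_iff_pos_right]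
  set P := ∑ i : Fin N, (v i.succ + v i.castSucc) ^ 2
  have hP : 0 ≤ P := Finset.sum_nonneg fun _ _ => sq_nonneg _
  by_contra! hle
  have h0 : v 0 = 0 := by nlinarith [sq_nonneg (v 0), sq_nonneg (v (Fin.last N))]
  have hpairs : ∀ i : Fin N, v i.succ + v i.castSucc = 0 := by
    have hP0 : P = 0 := by nlinarith [sq_nonneg (v 0), sq_nonneg (v (Fin.last N))]
    intro i
    exact pow_eq_zero_iff two_ne_zero |>.mp <|
      (Finset.sum_eq_zero_iff_of_nonneg fun _ _ => sq_nonneg _).mp hP0 i (Finset.mem_univ i)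
  refine hv (funext fun n => ?_)
  induction n using Fin.induction with
  | zero => exact h0
  | succ i ih => simpa [ih] using hpairs i

theorem posDef_smul_weightedSumSquares_sub_smul_comp_firstDiff {c₀ c₁ : R} (hc₁ : 0 < c₁)
    (h : 4 * c₁ ≤ c₀) :
    (c₀ • QuadraticMap.weightedSumSquares R (1 : Fin (N + 1) → R)
      - c₁ • (QuadraticMap.weightedSumSquares R (1 : Fin N → R)).comp (firstDiff R N)).PosDef := by
  intro v hv
  have hlt := sum_sq_firstDiff_lt hv
  have hS : 0 ≤ ∑ n, v n ^ 2 := Finset.sum_nonneg fun _ _ => sq_nonneg _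
  simp only [sub_apply, smul_apply, QuadraticMap.comp_apply,
    QuadraticMap.weightedSumSquares_apply, Pi.one_apply, one_mul, ← sq, smul_eq_mul]
  nlinarith [mul_lt_mul_of_pos_left hlt hc₁, mul_le_mul_of_nonneg_right h hS]

end FirstDiff

theorem cnc_flsa_log_strictConvexOn_general (N : ℕ)
    (lam0 lam1 a0 a1 : ℝ) (hlam0 : 0 < lam0) (hlam1 : 0 < lam1)
    (ha0 : 0 < a0) (ha1 : 0 < a1)
    (y : Fin (N + 1) → ℝ)
    (hcond : a0 * lam0 + 4 * a1 * lam1 ≤ 1) :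
    StrictConvexOn ℝ (Set.univ : Set (Fin (N + 1) → ℝ))
      (fun x : Fin (N + 1) → ℝ =>
        (1 / 2) * ∑ n, (y n - x n) ^ 2
          + lam0 * ∑ n, (1 / a0) * Real.log (1 + a0 * |x n|)
          + lam1 * ∑ i : Fin N,
              (1 / a1) * Real.log (1 + a1 * |x i.succ - x i.castSucc|)) := by
  have hQ := (posDef_smul_weightedSumSquares_sub_smul_comp_firstDiff (N := N)
    (c₀ := (1 - a0 * lam0) / 2) (c₁ := a1 * lam1 / 2) (by positivity) (by linarith)).strictConvexOn
  have hcoord : ConvexOn ℝ univ fun x : Fin (N + 1) → ℝ => ∑ n,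
      (y n ^ 2 / 2 - y n * LinearMap.proj n x
        + lam0 * (logPenalty a0 (LinearMap.proj n x) + a0 / 2 * LinearMap.proj n x ^ 2)) :=
    convexOn_univ_sum_comp_linearMap _ (fun n _ =>
      (convexOn_const_sub_mul _ _).add ((convexOn_logPenalty_add_sq ha0).smul hlam0.le)) _
  have hdiff : ConvexOn ℝ univ fun x : Fin (N + 1) → ℝ => ∑ i,
      lam1 * (logPenalty a1 (firstDiff ℝ N x i) + a1 / 2 * firstDiff ℝ N x i ^ 2) :=
    convexOn_univ_sum_comp_linearMap (g := fun _ t => lam1 * (logPenalty a1 t + a1 / 2 * t ^ 2))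
      _ (fun _ _ => (convexOn_logPenalty_add_sq ha1).smul hlam1.le)
      fun i => (LinearMap.proj i).comp (firstDiff ℝ N)
  refine ((hQ.add_convexOn hcoord).add_convexOn hdiff).congr fun x _ => ?_
  have hcoord_eq : ∑ n, (y n ^ 2 / 2 - y n * x n + lam0 * (logPenalty a0 (x n) + a0 / 2 * x n ^ 2))
      = 1 / 2 * ∑ n, (y n - x n) ^ 2 + lam0 * ∑ n, 1 / a0 * Real.log (1 + a0 * |x n|)
        - (1 - a0 * lam0) / 2 * ∑ n, x n * x n := by
    simp only [Finset.mul_sum, ← Finset.sum_add_distrib, ← Finset.sum_sub_distrib, logPenalty]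
    exact Finset.sum_congr rfl fun n _ => by ring
  have hdiff_eq : ∑ i, lam1 * (logPenalty a1 (firstDiff ℝ N x i) + a1 / 2 * firstDiff ℝ N x i ^ 2)
      = lam1 * ∑ i : Fin N, 1 / a1 * Real.log (1 + a1 * |x i.succ - x i.castSucc|)
        + a1 * lam1 / 2 * ∑ i, firstDiff ℝ N x i * firstDiff ℝ N x i := by
    simp only [Finset.mul_sum, ← Finset.sum_add_distrib, logPenalty, firstDiff_apply]
    exact Finset.sum_congr rfl fun i _ => by ring
  simp only [Pi.add_apply, sub_apply, smul_apply, QuadraticMap.comp_apply,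
    QuadraticMap.weightedSumSquares_apply, Pi.one_apply, one_mul, smul_eq_mul,
    LinearMap.proj_apply]
  linear_combination hcoord_eq + hdiff_eq

/-- **CNC fused lasso convexity with the logarithmic penalty.** For the
logarithmic penalty `φ(x; a) = (1/a)·log(1 + a|x|)` with `a > 0`, if
`a0·λ0 + 4·a1·λ1 ≤ 1` then the objective
`F(x) = ½‖y − x‖₂² + λ0 Σₙ φ(xₙ; a0) + λ1 Σₙ φ((Dx)ₙ; a1)` is strictly convex,
where `(Dx)ₙ = x_{n+1} − xₙ` (the signal length is `N + 1 ≥ 2`). -/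
theorem cnc_flsa_log_strictConvexOn (N : ℕ) (hN : 1 ≤ N)
    (lam0 lam1 a0 a1 : ℝ) (hlam0 : 0 < lam0) (hlam1 : 0 < lam1)
    (ha0 : 0 < a0) (ha1 : 0 < a1)
    (y : Fin (N + 1) → ℝ)
    (hcond : a0 * lam0 + 4 * a1 * lam1 ≤ 1) :
    StrictConvexOn ℝ (Set.univ : Set (Fin (N + 1) → ℝ))
      (fun x : Fin (N + 1) → ℝ =>
        (1 / 2) * ∑ n, (y n - x n) ^ 2
          + lam0 * ∑ n, (1 / a0) * Real.log (1 + a0 * |x n|)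
          + lam1 * ∑ i : Fin N,
              (1 / a1) * Real.log (1 + a1 * |x i.succ - x i.castSucc|)) :=
  cnc_flsa_log_strictConvexOn_general N lam0 lam1 a0 a1 hlam0 hlam1 ha0 ha1 y hcond
end

section
/- Let a ≥ 0 and let φ : ℝ → ℝ be a penalty function satisfying Assumption 1 with non-convexity parameter a. Then the function s : ℝ → ℝ defined by s(x) = φ(x) − |x| is twice continuously differentiable on all of ℝ, concave, and satisfies −a ≤ s″(x) ≤ 0 for all x ∈ ℝ. -/
/-!
Away from the origin `s'' = φ''`, which lies in `[-a, 0]` (for `x < 0` because `φ''` is even), so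
everything happens at `0`. On `(0, 1)` the derivative `φ'` is antitone and, since `φ'' ≥ -a`,
bounded; hence it has a limit at `0⁺`, which by the derivative-extension theorem is the right
derivative `1`. So `s' = φ' - sign` tends to `0` at `0⁺`, and at `0⁻` because `s'` is odd; as `s`
is continuous, `s'(0) = 0` and `s'` is continuous. The same extension argument applied to `s'`,
with `s'' = φ'' → -a` on both sides of `0`, gives `s''(0) = -a` and continuity of `s''`.
-/

open Set Filter Topology

/-- Assumption 1: a sparsity-inducing penalty function `φ` with non-convexity
parameter `a ≥ 0`: `φ` is continuous on `ℝ`, twice continuously differentiable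
on `ℝ \ {0}` and symmetric; `φ' > 0` and `φ'' ≤ 0` on `(0, ∞)`; the right
derivative of `φ` at `0` is `1`; and `inf_{x ≠ 0} φ''(x) = φ''(0⁺) = -a`. -/
structure PenaltyAssumption (φ : ℝ → ℝ) (a : ℝ) : Prop where
  continuous : Continuous φ
  symm : ∀ x : ℝ, φ (-x) = φ x
  hasDerivAt : ∀ x : ℝ, x ≠ 0 → HasDerivAt φ (deriv φ x) x
  hasDerivAt2 : ∀ x : ℝ, x ≠ 0 → HasDerivAt (deriv φ) (deriv (deriv φ) x) x
  continuousOn_deriv2 : ContinuousOn (deriv (deriv φ)) {x : ℝ | x ≠ 0}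
  deriv_pos : ∀ x : ℝ, 0 < x → 0 < deriv φ x
  deriv2_nonpos : ∀ x : ℝ, 0 < x → deriv (deriv φ) x ≤ 0
  rightDeriv_zero_eq_one : HasDerivWithinAt φ 1 (Set.Ioi 0) 0
  isGLB_deriv2 : IsGLB (deriv (deriv φ) '' {x : ℝ | x ≠ 0}) (-a)
  tendsto_deriv2 : Filter.Tendsto (deriv (deriv φ)) (nhdsWithin 0 (Set.Ioi 0)) (nhds (-a))

section Symmetry

variable {𝕜 F : Type*} [NontriviallyNormedField 𝕜] [NormedAddCommGroup F] [NormedSpace 𝕜 F]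
  {f : 𝕜 → F}

theorem Function.Even.deriv (hf : f.Even) : (_root_.deriv f).Odd := fun x => by
  have h := deriv_comp_neg f x
  rw [funext hf] at h
  rw [h, neg_neg]

theorem Function.Odd.deriv (hf : f.Odd) : (_root_.deriv f).Even := fun x => by
  have h := deriv_comp_neg f x
  rw [funext hf, deriv.fun_neg] at h
  rw [neg_inj.1 h]

end Symmetry

theorem tendsto_neg_nhdsLT_zero : Tendsto (fun x : ℝ => -x) (𝓝[<] 0) (𝓝[>] 0) := by
  simpa using tendsto_neg_nhdsLT (a := (0 : ℝ))

theorem Function.Even.tendsto_nhdsNE_zero {α : Type*} {f : ℝ → α} {l : Filter α} (hf : f.Even)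
    (h : Tendsto f (𝓝[>] 0) l) : Tendsto f (𝓝[≠] 0) l := by
  have hl : Tendsto f (𝓝[<] 0) l := by
    simpa only [Function.comp_def, hf.eq] using h.comp tendsto_neg_nhdsLT_zero
  rw [← nhdsLT_sup_nhdsGT]
  exact tendsto_sup.2 ⟨hl, h⟩

theorem Function.Odd.tendsto_nhdsNE_zero {E : Type*} [TopologicalSpace E] [AddCommGroup E]
    [IsTopologicalAddGroup E] {f : ℝ → E} (hf : f.Odd) (h : Tendsto f (𝓝[>] 0) (𝓝 0)) :
    Tendsto f (𝓝[≠] 0) (𝓝 0) := by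
  have hl : Tendsto f (𝓝[<] 0) (𝓝 0) := by
    simpa only [Function.comp_def, hf.eq, neg_neg, neg_zero] using
      (h.comp tendsto_neg_nhdsLT_zero).neg
  rw [← nhdsLT_sup_nhdsGT]
  exact tendsto_sup.2 ⟨hl, h⟩

section DerivativeLimit

variable {E : Type*} [NormedAddCommGroup E] [NormedSpace ℝ E] {f : ℝ → E} {x : ℝ} {e : E}

theorem hasDerivAt_of_tendsto_deriv_nhdsNE (hf : ∀ y ≠ x, DifferentiableAt ℝ f y)
    (hfx : ContinuousAt f x) (he : Tendsto (deriv f) (𝓝[≠] x) (𝓝 e)) : HasDerivAt f e x := by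
  classical
  simpa using hasDerivAt_of_hasDerivAt_of_ne (g := Function.update (deriv f) x e)
    (fun y hy => by simpa [hy] using (hf y hy).hasDerivAt) hfx (continuousAt_update_same.2 he)

theorem continuousAt_deriv_of_tendsto_deriv_nhdsNE (hf : ∀ y ≠ x, DifferentiableAt ℝ f y)
    (hfx : ContinuousAt f x) (he : Tendsto (deriv f) (𝓝[≠] x) (𝓝 e)) :
    ContinuousAt (deriv f) x := by
  rw [← continuousWithinAt_compl_self, ContinuousWithinAt,
    (hasDerivAt_of_tendsto_deriv_nhdsNE hf hfx he).deriv]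
  exact he

end DerivativeLimit

theorem bddAbove_image_Ioo_of_le_deriv {f : ℝ → ℝ} {a b C : ℝ} (hf : ContinuousOn f (Ioc a b))
    (hf' : DifferentiableOn ℝ f (Ioo a b)) (hC : ∀ x ∈ Ioo a b, C ≤ deriv f x) :
    BddAbove (f '' Ioo a b) := by
  refine ⟨f b + |C| * (b - a), ?_⟩
  rintro _ ⟨x, hx, rfl⟩
  have hslope := convex_Ioc a b |>.mul_sub_le_image_sub_of_le_deriv hf
    (by rwa [interior_Ioc]) (by rwa [interior_Ioc]) x (Ioo_subset_Ioc_self hx) b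
    (right_mem_Ioc.2 (hx.1.trans hx.2)) hx.2.le
  nlinarith [neg_abs_le C, abs_nonneg C, hx.1, hx.2]

theorem AntitoneOn.tendsto_deriv_nhdsGT {f : ℝ → ℝ} {a b c : ℝ} (hab : a < b)
    (hanti : AntitoneOn (deriv f) (Ioo a b)) (hbdd : BddAbove (deriv f '' Ioo a b))
    (hf : DifferentiableOn ℝ f (Ioo a b)) (hfa : ContinuousWithinAt f (Ioo a b) a)
    (hc : HasDerivWithinAt f c (Ioi a) a) : Tendsto (deriv f) (𝓝[>] a) (𝓝 c) := by
  have hlim := hanti.tendsto_nhdsWithin_Ioo_right (nonempty_Ioo.2 hab) hbdd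
  have hderiv := (hasDerivWithinAt_Ici_of_tendsto_deriv hf hfa (Ioo_mem_nhdsGT hab) hlim).mono
    Ioi_subset_Ici_self
  rwa [← hc.derivWithin (uniqueDiffWithinAt_Ioi a), hderiv.derivWithin (uniqueDiffWithinAt_Ioi a)]

theorem contDiff_two_of_continuous_deriv_deriv {𝕜 F : Type*} [NontriviallyNormedField 𝕜]
    [NormedAddCommGroup F] [NormedSpace 𝕜 F] {f : 𝕜 → F} (hf : Differentiable 𝕜 f)
    (hf' : Differentiable 𝕜 (deriv f)) (hf'' : Continuous (deriv (deriv f))) :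
    ContDiff 𝕜 2 f := by
  rw [show (2 : WithTop ℕ∞) = 1 + 1 by norm_num, contDiff_succ_iff_deriv, contDiff_one_iff_deriv]
  exact ⟨hf, by simp, hf', hf''⟩
namespace PenaltyAssumption

variable {φ : ℝ → ℝ} {a : ℝ} (hφ : PenaltyAssumption φ a)
include hφ

theorem deriv2_even : (deriv (deriv φ)).Even :=
  (Function.Even.deriv hφ.symm).deriv

theorem neg_le_deriv2 {x : ℝ} (hx : x ≠ 0) : -a ≤ deriv (deriv φ) x :=
  hφ.isGLB_deriv2.1 ⟨x, hx, rfl⟩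

theorem deriv2_nonpos_of_ne {x : ℝ} (hx : x ≠ 0) : deriv (deriv φ) x ≤ 0 := by
  rcases hx.lt_or_gt with hx | hx
  · rw [← hφ.deriv2_even.eq]
    exact hφ.deriv2_nonpos (-x) (neg_pos.2 hx)
  · exact hφ.deriv2_nonpos x hx

theorem tendsto_deriv_nhdsGT_zero : Tendsto (deriv φ) (𝓝[>] 0) (𝓝 1) := by
  have hderiv_cont : ContinuousOn (deriv φ) (Ioc 0 1) := fun x hx =>
    (hφ.hasDerivAt2 x hx.1.ne').continuousAt.continuousWithinAt
  have hderiv_diff : DifferentiableOn ℝ (deriv φ) (Ioo 0 1) := fun x hx =>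
    (hφ.hasDerivAt2 x hx.1.ne').differentiableAt.differentiableWithinAt
  have hanti : AntitoneOn (deriv φ) (Ioo 0 1) :=
    antitoneOn_of_deriv_nonpos (convex_Ioo 0 1) (hderiv_cont.mono Ioo_subset_Ioc_self)
      (by rwa [interior_Ioo]) (by simpa using fun x hx _ => hφ.deriv2_nonpos x hx)
  have hbdd : BddAbove (deriv φ '' Ioo 0 1) :=
    bddAbove_image_Ioo_of_le_deriv hderiv_cont hderiv_diff fun x hx => hφ.neg_le_deriv2 hx.1.ne'
  exact hanti.tendsto_deriv_nhdsGT zero_lt_one hbdd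
    (fun x hx => (hφ.hasDerivAt x hx.1.ne').differentiableAt.differentiableWithinAt)
    hφ.continuous.continuousWithinAt hφ.rightDeriv_zero_eq_one

theorem tendsto_deriv2_nhdsNE_zero : Tendsto (deriv (deriv φ)) (𝓝[≠] 0) (𝓝 (-a)) :=
  hφ.deriv2_even.tendsto_nhdsNE_zero hφ.tendsto_deriv2

theorem hasDerivAt_sub_abs_of_ne {x : ℝ} (hx : x ≠ 0) :
    HasDerivAt (fun y => φ y - |y|) (deriv φ x - SignType.sign x) x :=
  (hφ.hasDerivAt x hx).sub (hasDerivAt_abs hx)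

theorem deriv_sub_abs_eventuallyEq {x : ℝ} (hx : x ≠ 0) :
    deriv (fun y => φ y - |y|) =ᶠ[𝓝 x] fun y => deriv φ y - SignType.sign x := by
  have hsign : ∀ᶠ y in 𝓝 x, SignType.sign y = SignType.sign x := by
    have hcont := continuousAt_sign_of_ne_zero hx
    rwa [ContinuousAt, nhds_discrete SignType, tendsto_pure] at hcont
  filter_upwards [hsign, isOpen_ne.mem_nhds hx] with y hsy hy
  rw [(hφ.hasDerivAt_sub_abs_of_ne hy).deriv, hsy]

theorem tendsto_deriv_sub_abs_nhdsNE_zero :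
    Tendsto (deriv fun y => φ y - |y|) (𝓝[≠] 0) (𝓝 0) := by
  have heven : (fun y => φ y - |y|).Even := fun x => by simp only [hφ.symm, abs_neg]
  refine heven.deriv.tendsto_nhdsNE_zero ?_
  have hlim := hφ.tendsto_deriv_nhdsGT_zero.sub_const 1
  rw [sub_self] at hlim
  refine hlim.congr' ?_
  filter_upwards [self_mem_nhdsWithin] with y (hy : 0 < y)
  rw [(hφ.hasDerivAt_sub_abs_of_ne hy.ne').deriv, sign_pos hy, SignType.coe_one]

theorem differentiable_sub_abs : Differentiable ℝ fun y => φ y - |y| := by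
  have hdiff : ∀ x ≠ 0, DifferentiableAt ℝ (fun y => φ y - |y|) x := fun x hx =>
    (hφ.hasDerivAt_sub_abs_of_ne hx).differentiableAt
  intro x
  rcases eq_or_ne x 0 with rfl | hx
  · exact (hasDerivAt_of_tendsto_deriv_nhdsNE hdiff (hφ.continuous.sub continuous_abs).continuousAt
      hφ.tendsto_deriv_sub_abs_nhdsNE_zero).differentiableAt
  · exact hdiff x hx

theorem hasDerivAt_deriv_sub_abs_of_ne {x : ℝ} (hx : x ≠ 0) :
    HasDerivAt (deriv fun y => φ y - |y|) (deriv (deriv φ) x) x :=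
  ((hφ.hasDerivAt2 x hx).sub_const _).congr_of_eventuallyEq (hφ.deriv_sub_abs_eventuallyEq hx)

theorem tendsto_deriv2_sub_abs_nhdsNE_zero :
    Tendsto (deriv (deriv fun y => φ y - |y|)) (𝓝[≠] 0) (𝓝 (-a)) :=
  hφ.tendsto_deriv2_nhdsNE_zero.congr' <| eventually_nhdsWithin_of_forall fun _ hy =>
    (hφ.hasDerivAt_deriv_sub_abs_of_ne hy).deriv.symm

theorem hasDerivAt_deriv_sub_abs_zero : HasDerivAt (deriv fun y => φ y - |y|) (-a) 0 :=
  hasDerivAt_of_tendsto_deriv_nhdsNE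
    (fun _ hy => (hφ.hasDerivAt_deriv_sub_abs_of_ne hy).differentiableAt)
    (continuousAt_deriv_of_tendsto_deriv_nhdsNE (fun y _ => hφ.differentiable_sub_abs y)
      (hφ.continuous.sub continuous_abs).continuousAt hφ.tendsto_deriv_sub_abs_nhdsNE_zero)
    hφ.tendsto_deriv2_sub_abs_nhdsNE_zero

theorem differentiable_deriv_sub_abs : Differentiable ℝ (deriv fun y => φ y - |y|) := by
  intro x
  rcases eq_or_ne x 0 with rfl | hx
  · exact hφ.hasDerivAt_deriv_sub_abs_zero.differentiableAt
  · exact (hφ.hasDerivAt_deriv_sub_abs_of_ne hx).differentiableAt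

theorem continuous_deriv2_sub_abs : Continuous (deriv (deriv fun y => φ y - |y|)) := by
  refine continuous_iff_continuousAt.2 fun x => ?_
  rcases eq_or_ne x 0 with rfl | hx
  · exact continuousAt_deriv_of_tendsto_deriv_nhdsNE
      (fun y _ => hφ.differentiable_deriv_sub_abs y)
      hφ.differentiable_deriv_sub_abs.continuous.continuousAt
      hφ.tendsto_deriv2_sub_abs_nhdsNE_zero
  · refine (hφ.continuousOn_deriv2.continuousAt (isOpen_ne.mem_nhds hx)).congr ?_
    filter_upwards [isOpen_ne.mem_nhds hx] with y hy
    exact (hφ.hasDerivAt_deriv_sub_abs_of_ne hy).deriv.symm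

theorem deriv2_sub_abs_mem_Icc (ha : 0 ≤ a) (x : ℝ) :
    deriv (deriv fun y => φ y - |y|) x ∈ Icc (-a) 0 := by
  rcases eq_or_ne x 0 with rfl | hx
  · rw [hφ.hasDerivAt_deriv_sub_abs_zero.deriv]
    exact ⟨le_rfl, neg_nonpos.2 ha⟩
  · rw [(hφ.hasDerivAt_deriv_sub_abs_of_ne hx).deriv]
    exact ⟨hφ.neg_le_deriv2 hx, hφ.deriv2_nonpos_of_ne hx⟩

end PenaltyAssumption

/-- **Lemma 2.** If `φ` satisfies Assumption 1 with parameter `a`, then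
`s(x) = φ(x) − |x|` is twice continuously differentiable on all of `ℝ`,
concave, and its second derivative satisfies `−a ≤ s″(x) ≤ 0`. -/
theorem penalty_sub_abs_contDiff_concave (a : ℝ) (ha : 0 ≤ a)
    (φ : ℝ → ℝ) (hφ : PenaltyAssumption φ a) :
    ContDiff ℝ 2 (fun x : ℝ => φ x - |x|) ∧
    ConcaveOn ℝ Set.univ (fun x : ℝ => φ x - |x|) ∧
    ∀ x : ℝ, -a ≤ deriv (deriv (fun x : ℝ => φ x - |x|)) x ∧
      deriv (deriv (fun x : ℝ => φ x - |x|)) x ≤ 0 :=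
  ⟨contDiff_two_of_continuous_deriv_deriv hφ.differentiable_sub_abs
      hφ.differentiable_deriv_sub_abs hφ.continuous_deriv2_sub_abs,
    concaveOn_univ_of_deriv2_nonpos hφ.differentiable_sub_abs hφ.differentiable_deriv_sub_abs
      fun x => (hφ.deriv2_sub_abs_mem_Icc ha x).2,
    hφ.deriv2_sub_abs_mem_Icc ha⟩
end

section
/- Let a > 0 and define s : ℝ → ℝ by s(x) = (1/a)·log(1 + a·|x|) − |x|. Then s is twice continuously differentiable on all of ℝ with s′(x) = −a·x/(1 + a·|x|) and s″(x) = −a/(1 + a·|x|)² for all x ∈ ℝ; in particular s is concave and −a ≤ s″(x) ≤ 0 for all x ∈ ℝ. -/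
/-!
Away from `0`, `s` is a composition of smooth maps and the chain rule gives `s'` and `s''`.
At `0` the kink of `|x|` is cancelled by the kink of `log (1 + a|x|) / a`, whose one-sided
slopes are also `±1`; formally, `s` and `s'` are continuous and their derivatives off `0`
extend continuously to `0`, so by the derivative-extension theorem the formulas hold at `0`
as well. Concavity and the bounds follow from `s'' = -a / (1 + a|x|)² ∈ [-a, 0]`.
-/

open Real Set

theorem contDiff_two_of_hasDerivAt {𝕜 F : Type*} [NontriviallyNormedField 𝕜]
    [NormedAddCommGroup F] [NormedSpace 𝕜 F] {f f' f'' : 𝕜 → F}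
    (hf : ∀ x, HasDerivAt f (f' x) x) (hf' : ∀ x, HasDerivAt f' (f'' x) x)
    (hf'' : Continuous f'') : ContDiff 𝕜 2 f := by
  have hd : deriv f = f' := funext fun x => (hf x).deriv
  have hd' : deriv f' = f'' := funext fun x => (hf' x).deriv
  rw [show (2 : WithTop ℕ∞) = 1 + 1 from rfl, contDiff_succ_iff_deriv, hd,
    contDiff_one_iff_deriv, hd']
  exact ⟨fun x => (hf x).differentiableAt, by simp, fun x => (hf' x).differentiableAt, hf''⟩

section LogPenaltyGap

variable {a : ℝ}

lemma one_add_mul_abs_pos (ha : 0 ≤ a) (x : ℝ) : 0 < 1 + a * |x| := by positivity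

noncomputable def logPenaltyGap (a x : ℝ) : ℝ := 1 / a * log (1 + a * |x|) - |x|

lemma continuous_logPenaltyGap (ha : 0 ≤ a) : Continuous (logPenaltyGap a) := by
  unfold logPenaltyGap
  fun_prop (disch := exact fun x => (one_add_mul_abs_pos ha x).ne')

lemma continuous_neg_mul_div_one_add_mul_abs (ha : 0 ≤ a) :
    Continuous fun x : ℝ => -a * x / (1 + a * |x|) := by
  fun_prop (disch := exact fun x => (one_add_mul_abs_pos ha x).ne')

lemma continuous_neg_div_one_add_mul_abs_sq (ha : 0 ≤ a) :
    Continuous fun x : ℝ => -a / (1 + a * |x|) ^ 2 := by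
  fun_prop (disch := exact fun x => (pow_pos (one_add_mul_abs_pos ha x) 2).ne')

lemma hasDerivAt_logPenaltyGap_of_ne_zero (ha : 0 < a) {x : ℝ} (hx : x ≠ 0) :
    HasDerivAt (logPenaltyGap a) (-a * x / (1 + a * |x|)) x := by
  have hpos := one_add_mul_abs_pos ha.le x
  have h := ((((hasDerivAt_abs hx).const_mul a).const_add 1).log hpos.ne').const_mul (1 / a)
    |>.sub (hasDerivAt_abs hx)
  refine HasDerivAt.congr_deriv (f := logPenaltyGap a) h ?_
  field_simp
  linear_combination -a * sign_mul_abs x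

lemma hasDerivAt_neg_mul_div_one_add_mul_abs_of_ne_zero (ha : 0 ≤ a) {x : ℝ} (hx : x ≠ 0) :
    HasDerivAt (fun x : ℝ => -a * x / (1 + a * |x|)) (-a / (1 + a * |x|) ^ 2) x := by
  have hpos := one_add_mul_abs_pos ha x
  refine (((hasDerivAt_id' x).const_mul (-a)).div
    (((hasDerivAt_abs hx).const_mul a).const_add 1) hpos.ne').congr_deriv ?_
  field_simp
  linear_combination a ^ 2 * self_mul_sign x

lemma hasDerivAt_logPenaltyGap (ha : 0 < a) (x : ℝ) :
    HasDerivAt (logPenaltyGap a) (-a * x / (1 + a * |x|)) x :=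
  hasDerivAt_of_hasDerivAt_of_ne' (x := 0) (g := fun x => -a * x / (1 + a * |x|))
    (fun _ hy => hasDerivAt_logPenaltyGap_of_ne_zero ha hy)
    (continuous_logPenaltyGap ha.le).continuousAt
    (continuous_neg_mul_div_one_add_mul_abs ha.le).continuousAt x

lemma hasDerivAt_neg_mul_div_one_add_mul_abs (ha : 0 ≤ a) (x : ℝ) :
    HasDerivAt (fun x : ℝ => -a * x / (1 + a * |x|)) (-a / (1 + a * |x|) ^ 2) x :=
  hasDerivAt_of_hasDerivAt_of_ne' (x := 0) (g := fun x => -a / (1 + a * |x|) ^ 2)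
    (fun _ hy => hasDerivAt_neg_mul_div_one_add_mul_abs_of_ne_zero ha hy)
    (continuous_neg_mul_div_one_add_mul_abs ha).continuousAt
    (continuous_neg_div_one_add_mul_abs_sq ha).continuousAt x

lemma neg_div_one_add_mul_abs_sq_mem_Icc (ha : 0 ≤ a) (x : ℝ) :
    -a / (1 + a * |x|) ^ 2 ∈ Icc (-a) 0 := by
  have hsq : 1 ≤ (1 + a * |x|) ^ 2 := one_le_pow₀ (by nlinarith [abs_nonneg x])
  rw [neg_div]
  exact ⟨neg_le_neg (div_le_self ha hsq), neg_nonpos.2 (by positivity)⟩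

end LogPenaltyGap

/-- For the logarithmic penalty with parameter `a > 0`, the function
`s(x) = (1/a)·log(1 + a|x|) − |x|` is twice continuously differentiable on all
of `ℝ`, with `s′(x) = −a·x/(1 + a|x|)` and `s″(x) = −a/(1 + a|x|)²`; in
particular `s` is concave and `−a ≤ s″(x) ≤ 0` for all `x`. -/
theorem log_penalty_sub_abs_derivs (a : ℝ) (ha : 0 < a) :
    ContDiff ℝ 2 (fun x : ℝ => (1 / a) * Real.log (1 + a * |x|) - |x|) ∧
    (∀ x : ℝ, HasDerivAt (fun x : ℝ => (1 / a) * Real.log (1 + a * |x|) - |x|)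
      (-a * x / (1 + a * |x|)) x) ∧
    (∀ x : ℝ, HasDerivAt
      (deriv (fun x : ℝ => (1 / a) * Real.log (1 + a * |x|) - |x|))
      (-a / (1 + a * |x|) ^ 2) x) ∧
    ConcaveOn ℝ Set.univ (fun x : ℝ => (1 / a) * Real.log (1 + a * |x|) - |x|) ∧
    (∀ x : ℝ,
      -a ≤ deriv (deriv (fun x : ℝ => (1 / a) * Real.log (1 + a * |x|) - |x|)) x ∧
      deriv (deriv (fun x : ℝ => (1 / a) * Real.log (1 + a * |x|) - |x|)) x ≤ 0) := by
  change ContDiff ℝ 2 (logPenaltyGap a) ∧ (∀ x, HasDerivAt (logPenaltyGap a) _ x) ∧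
    (∀ x, HasDerivAt (deriv (logPenaltyGap a)) _ x) ∧ ConcaveOn ℝ univ (logPenaltyGap a) ∧
    ∀ x, -a ≤ deriv (deriv (logPenaltyGap a)) x ∧ deriv (deriv (logPenaltyGap a)) x ≤ 0
  have hd1 := hasDerivAt_logPenaltyGap ha
  have hd2 := hasDerivAt_neg_mul_div_one_add_mul_abs ha.le
  have hderiv : deriv (logPenaltyGap a) = fun x => -a * x / (1 + a * |x|) :=
    funext fun x => (hd1 x).deriv
  have hderiv2 (x : ℝ) : deriv (deriv (logPenaltyGap a)) x = -a / (1 + a * |x|) ^ 2 := by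
    rw [hderiv]; exact (hd2 x).deriv
  refine ⟨contDiff_two_of_hasDerivAt hd1 hd2 (continuous_neg_div_one_add_mul_abs_sq ha.le), hd1,
    hderiv ▸ hd2, ?_, fun x => ?_⟩
  · refine concaveOn_univ_of_deriv2_nonpos (fun x => (hd1 x).differentiableAt)
      (hderiv ▸ fun x => (hd2 x).differentiableAt) fun x => ?_
    rw [Function.iterate_succ_apply, Function.iterate_one, hderiv2]
    exact (neg_div_one_add_mul_abs_sq_mem_Icc ha.le x).2
  · rw [hderiv2]; exact neg_div_one_add_mul_abs_sq_mem_Icc ha.le x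
end

section
/- Let N ≥ 2, λ0 > 0, λ1 > 0 and y ∈ ℝ^N. Let t ∈ ℝ^N be the (unique) minimizer over x ∈ ℝ^N of the total variation denoising objective (1/2)‖y − x‖₂² + λ1·‖Dx‖₁. Then the vector x* ∈ ℝ^N obtained by applying the soft-threshold function with threshold λ0 elementwise to t, i.e., x*_n = soft(t_n; λ0), is a minimizer over x ∈ ℝ^N of the ℓ1 fused lasso signal approximation objective (1/2)‖y − x‖₂² + λ0·‖x‖₁ + λ1·‖Dx‖₁. -/
/-!
Both objectives are convex, and their one-sided directional derivatives can be computed term by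
term (`absDirDeriv a b` is that of `|·|` at `a` in the direction `b`). Minimality of `t` makes the
total-variation derivative at `t` nonnegative in every direction. Soft-thresholding is monotone, so
each nonzero difference of `soft t` has the sign of the corresponding difference of `t`, and
`t - soft t` is a subgradient of `λ0‖·‖₁` at `soft t`. Hence the fused-lasso derivative at `soft t`
dominates the total-variation derivative at `t`, and convexity makes `soft t` a minimizer.
-/

noncomputable def soft (x lam : ℝ) : ℝ :=
  if x < -lam then x + lam else if x ≤ lam then 0 else x - lam

open Finset Filter Topology

noncomputable def absDirDeriv (a b : ℝ) : ℝ :=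
  if 0 < a then b else if a < 0 then -b else |b|

lemma absDirDeriv_le_abs (a b : ℝ) : absDirDeriv a b ≤ |b| := by
  unfold absDirDeriv
  split_ifs
  exacts [le_abs_self b, neg_le_abs b, le_rfl]

lemma absDirDeriv_le_abs_add_sub_abs (a b : ℝ) : absDirDeriv a b ≤ |a + b| - |a| := by
  unfold absDirDeriv
  split_ifs with hpos hneg
  · linarith [abs_of_pos hpos, le_abs_self (a + b)]
  · linarith [abs_of_neg hneg, neg_abs_le (a + b)]
  · simp [le_antisymm (not_lt.1 hpos) (not_lt.1 hneg)]

lemma tendsto_slope_abs_add_mul (a b : ℝ) :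
    Tendsto (fun ε : ℝ => ε⁻¹ * (|a + ε * b| - |a|)) (𝓝[>] 0) (𝓝 (absDirDeriv a b)) := by
  have hline : HasDerivAt (fun ε : ℝ => a + ε * b) b 0 := by
    simpa using ((hasDerivAt_id (0 : ℝ)).mul_const b).const_add a
  unfold absDirDeriv
  split_ifs with hpos hneg
  · have := (hasDerivAt_abs_pos (by simpa using hpos)).comp 0 hline
    simpa using this.tendsto_slope_zero_right
  · have := (hasDerivAt_abs_neg (by simpa using hneg)).comp 0 hline
    simpa using this.tendsto_slope_zero_right
  · obtain rfl : a = 0 := le_antisymm (not_lt.1 hpos) (not_lt.1 hneg)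
    refine tendsto_const_nhds.congr' ?_
    filter_upwards [self_mem_nhdsWithin] with ε (hε : 0 < ε)
    rw [zero_add, abs_zero, sub_zero, abs_mul, abs_of_pos hε, inv_mul_cancel_left₀ hε.ne']

lemma tendsto_slope_half_sq_sub (a b c : ℝ) :
    Tendsto (fun ε : ℝ => ε⁻¹ * ((1 / 2) * (a - (b + ε * c)) ^ 2 - (1 / 2) * (a - b) ^ 2))
      (𝓝[>] 0) (𝓝 ((b - a) * c)) := by
  have : HasDerivAt (fun ε : ℝ => (1 / 2) * (a - (b + ε * c)) ^ 2) ((b - a) * c) 0 := by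
    refine (((hasDerivAt_mul_const c).const_add b).const_sub a |>.fun_pow 2
      |>.const_mul (1 / 2)).congr_deriv ?_
    norm_num
    ring
  simpa using this.tendsto_slope_zero_right

lemma soft_mono (lam : ℝ) : Monotone fun x => soft x lam := by
  intro a b hab
  simp only [soft]
  split_ifs <;> linarith

lemma soft_sub_mul_add_absDirDeriv_nonneg (a lam b : ℝ) :
    0 ≤ (soft a lam - a) * b + lam * absDirDeriv (soft a lam) b := by
  unfold soft absDirDeriv
  split_ifs with hlow _ _ hhigh <;> try linarith
  have ha : |a| ≤ lam := abs_le.2 ⟨not_lt.1 hlow, hhigh⟩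
  linarith [le_abs_self (a * b), abs_mul a b, mul_le_mul_of_nonneg_right ha (abs_nonneg b)]

lemma absDirDeriv_sub_le_of_monotone {f : ℝ → ℝ} (hf : Monotone f) (a b e : ℝ) :
    absDirDeriv (b - a) e ≤ absDirDeriv (f b - f a) e := by
  rcases lt_trichotomy (f a) (f b) with hlt | heq | hgt
  · have hab : a < b := hf.reflect_lt hlt
    simp [absDirDeriv, sub_pos.2 hab, sub_pos.2 hlt]
  · simpa [absDirDeriv, heq] using absDirDeriv_le_abs (b - a) e
  · have hba : b < a := hf.reflect_lt hgt
    simp [absDirDeriv, sub_neg.2 hba, sub_neg.2 hgt, not_lt.2 hba.le, not_lt.2 hgt.le]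

variable {N : ℕ}

noncomputable def flsaObjective (lam0 lam1 : ℝ) (y x : Fin (N + 1) → ℝ) : ℝ :=
  (1 / 2) * ∑ n, (y n - x n) ^ 2 + lam0 * ∑ n, |x n|
    + lam1 * ∑ i : Fin N, |x i.succ - x i.castSucc|

noncomputable def flsaDirDeriv (lam0 lam1 : ℝ) (y x d : Fin (N + 1) → ℝ) : ℝ :=
  ∑ n, (x n - y n) * d n + lam0 * ∑ n, absDirDeriv (x n) (d n)
    + lam1 * ∑ i : Fin N, absDirDeriv (x i.succ - x i.castSucc) (d i.succ - d i.castSucc)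

lemma flsaObjective_add_flsaDirDeriv_le {lam0 lam1 : ℝ} (hlam0 : 0 ≤ lam0) (hlam1 : 0 ≤ lam1)
    (y x d : Fin (N + 1) → ℝ) :
    flsaObjective lam0 lam1 y x + flsaDirDeriv lam0 lam1 y x d
      ≤ flsaObjective lam0 lam1 y (x + d) := by
  have hsq : (1 / 2) * ∑ n, (y n - x n) ^ 2 + ∑ n, (x n - y n) * d n
      ≤ (1 / 2) * ∑ n, (y n - (x + d) n) ^ 2 := by
    rw [mul_sum, mul_sum, ← sum_add_distrib]
    gcongr with n
    rw [Pi.add_apply]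
    nlinarith [sq_nonneg (d n)]
  have habs : ∑ n, |x n| + ∑ n, absDirDeriv (x n) (d n) ≤ ∑ n, |(x + d) n| := by
    rw [← sum_add_distrib]
    gcongr with n
    rw [Pi.add_apply]
    linarith [absDirDeriv_le_abs_add_sub_abs (x n) (d n)]
  have htv : ∑ i : Fin N, |x i.succ - x i.castSucc|
        + ∑ i : Fin N, absDirDeriv (x i.succ - x i.castSucc) (d i.succ - d i.castSucc)
      ≤ ∑ i : Fin N, |(x + d) i.succ - (x + d) i.castSucc| := by
    rw [← sum_add_distrib]
    gcongr with i
    have := absDirDeriv_le_abs_add_sub_abs (x i.succ - x i.castSucc) (d i.succ - d i.castSucc)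
    rw [Pi.add_apply, Pi.add_apply, add_sub_add_comm]
    linarith
  unfold flsaObjective flsaDirDeriv
  linarith [mul_le_mul_of_nonneg_left habs hlam0, mul_le_mul_of_nonneg_left htv hlam1]

lemma tendsto_slope_flsaObjective (lam0 lam1 : ℝ) (y x d : Fin (N + 1) → ℝ) :
    Tendsto (fun ε : ℝ => ε⁻¹ * (flsaObjective lam0 lam1 y (x + ε • d)
      - flsaObjective lam0 lam1 y x)) (𝓝[>] 0) (𝓝 (flsaDirDeriv lam0 lam1 y x d)) := by
  have hsq := tendsto_finsetSum univ fun n _ => tendsto_slope_half_sq_sub (y n) (x n) (d n)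
  have habs := tendsto_finsetSum univ fun n _ => tendsto_slope_abs_add_mul (x n) (d n)
  have htv := tendsto_finsetSum univ fun (i : Fin N) _ =>
    tendsto_slope_abs_add_mul (x i.succ - x i.castSucc) (d i.succ - d i.castSucc)
  refine ((hsq.add (habs.const_mul lam0)).add (htv.const_mul lam1)).congr fun ε => ?_
  have hdiff : ∀ i : Fin N, (x + ε • d) i.succ - (x + ε • d) i.castSucc
      = x i.succ - x i.castSucc + ε * (d i.succ - d i.castSucc) := fun i => by
    simp only [Pi.add_apply, Pi.smul_apply, smul_eq_mul]; ring
  simp only [flsaObjective, hdiff]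
  simp only [Pi.add_apply, Pi.smul_apply, smul_eq_mul, ← mul_sum, sum_sub_distrib]
  ring

lemma flsaDirDeriv_nonneg_of_forall_le {lam0 lam1 : ℝ} {y x : Fin (N + 1) → ℝ}
    (hx : ∀ z, flsaObjective lam0 lam1 y x ≤ flsaObjective lam0 lam1 y z) (d : Fin (N + 1) → ℝ) :
    0 ≤ flsaDirDeriv lam0 lam1 y x d := by
  refine ge_of_tendsto (tendsto_slope_flsaObjective lam0 lam1 y x d) ?_
  filter_upwards [self_mem_nhdsWithin] with ε (hε : 0 < ε)
  exact mul_nonneg (inv_nonneg.2 hε.le) (sub_nonneg.2 (hx _))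

lemma flsaDirDeriv_le_flsaDirDeriv_soft {lam1 : ℝ} (hlam1 : 0 ≤ lam1) (lam0 : ℝ)
    (y t d : Fin (N + 1) → ℝ) :
    flsaDirDeriv 0 lam1 y t d ≤ flsaDirDeriv lam0 lam1 y (fun n => soft (t n) lam0) d := by
  have hres : 0 ≤ ∑ n, ((soft (t n) lam0 - t n) * d n
      + lam0 * absDirDeriv (soft (t n) lam0) (d n)) :=
    sum_nonneg fun n _ => soft_sub_mul_add_absDirDeriv_nonneg (t n) lam0 (d n)
  have htv : ∑ i : Fin N, absDirDeriv (t i.succ - t i.castSucc) (d i.succ - d i.castSucc)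
      ≤ ∑ i : Fin N, absDirDeriv (soft (t i.succ) lam0 - soft (t i.castSucc) lam0)
          (d i.succ - d i.castSucc) :=
    sum_le_sum fun i _ => absDirDeriv_sub_le_of_monotone (soft_mono lam0) _ _ _
  have hsplit : ∑ n, (soft (t n) lam0 - y n) * d n
      = ∑ n, (t n - y n) * d n + ∑ n, (soft (t n) lam0 - t n) * d n := by
    rw [← sum_add_distrib]; congr 1; ext n; ring
  simp only [flsaDirDeriv, zero_mul, add_zero]
  rw [sum_add_distrib, ← mul_sum] at hres
  linarith [mul_le_mul_of_nonneg_left htv hlam1]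

theorem flsa_solution_soft_of_tvd_general (N : ℕ)
    (lam0 lam1 : ℝ) (hlam0 : 0 < lam0) (hlam1 : 0 < lam1)
    (y t : Fin (N + 1) → ℝ)
    (ht : ∀ x : Fin (N + 1) → ℝ, x ≠ t →
      (1 / 2) * ∑ n, (y n - t n) ^ 2
          + lam1 * ∑ i : Fin N, |t i.succ - t i.castSucc|
        < (1 / 2) * ∑ n, (y n - x n) ^ 2
          + lam1 * ∑ i : Fin N, |x i.succ - x i.castSucc|) :
    ∀ x : Fin (N + 1) → ℝ,
      (1 / 2) * ∑ n, (y n - soft (t n) lam0) ^ 2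
          + lam0 * ∑ n, |soft (t n) lam0|
          + lam1 * ∑ i : Fin N, |soft (t i.succ) lam0 - soft (t i.castSucc) lam0|
        ≤ (1 / 2) * ∑ n, (y n - x n) ^ 2
          + lam0 * ∑ n, |x n|
          + lam1 * ∑ i : Fin N, |x i.succ - x i.castSucc| := by
  intro x
  set w : Fin (N + 1) → ℝ := fun n => soft (t n) lam0
  have htvd : ∀ z, flsaObjective 0 lam1 y t ≤ flsaObjective 0 lam1 y z := by
    intro z
    rcases eq_or_ne z t with rfl | hz
    · exact le_rfl
    · simpa [flsaObjective] using (ht z hz).le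
  have hderiv : 0 ≤ flsaDirDeriv lam0 lam1 y w (x - w) :=
    (flsaDirDeriv_nonneg_of_forall_le htvd (x - w)).trans
      (flsaDirDeriv_le_flsaDirDeriv_soft hlam1.le lam0 y t (x - w))
  have hconvex := flsaObjective_add_flsaDirDeriv_le hlam0.le hlam1.le y w (x - w)
  rw [add_sub_cancel] at hconvex
  exact le_of_add_le_of_nonneg_left hconvex hderiv

/-- **Lemma 1 (Friedman et al.).** Let `t` be the unique minimizer of the total
variation denoising objective `½‖y − x‖₂² + λ1‖Dx‖₁`.  Then the elementwise
soft-thresholding `x*ₙ = soft(tₙ; λ0)` of `t` minimizes the ℓ1 fused lasso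
signal approximation objective `½‖y − x‖₂² + λ0‖x‖₁ + λ1‖Dx‖₁`.
Here `(Dx)ₙ = x_{n+1} − xₙ` and the signal length is `N + 1 ≥ 2`. -/
theorem flsa_solution_soft_of_tvd (N : ℕ) (hN : 1 ≤ N)
    (lam0 lam1 : ℝ) (hlam0 : 0 < lam0) (hlam1 : 0 < lam1)
    (y t : Fin (N + 1) → ℝ)
    (ht : ∀ x : Fin (N + 1) → ℝ, x ≠ t →
      (1 / 2) * ∑ n, (y n - t n) ^ 2
          + lam1 * ∑ i : Fin N, |t i.succ - t i.castSucc|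
        < (1 / 2) * ∑ n, (y n - x n) ^ 2
          + lam1 * ∑ i : Fin N, |x i.succ - x i.castSucc|) :
    ∀ x : Fin (N + 1) → ℝ,
      (1 / 2) * ∑ n, (y n - soft (t n) lam0) ^ 2
          + lam0 * ∑ n, |soft (t n) lam0|
          + lam1 * ∑ i : Fin N, |soft (t i.succ) lam0 - soft (t i.castSucc) lam0|
        ≤ (1 / 2) * ∑ n, (y n - x n) ^ 2
          + lam0 * ∑ n, |x n|
          + lam1 * ∑ i : Fin N, |x i.succ - x i.castSucc| :=
  flsa_solution_soft_of_tvd_general N lam0 lam1 hlam0 hlam1 y t ht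
end

section
/- Let N ≥ 2, λ0 > 0, λ1 > 0, a0 ≥ 0, a1 ≥ 0, let φ0, φ1 : ℝ → ℝ satisfy Assumption 1 with parameters a0, a1 respectively, let s_i(x) = φ_i(x) − |x| and φ_i^M(x, v) = |x| + s_i′(v)(x − v) + s_i(v) for i = 0, 1, and let y ∈ ℝ^N. Define F^M(x, v) = (1/2)‖y − x‖₂² + λ0·Σ_{n=1}^{N} φ0^M(x_n, v_n) + λ1·Σ_{n=1}^{N−1} φ1^M((Dx)_n, (Dv)_n), and for v ∈ ℝ^N define ỹ(v) = y − λ0·s0′(v) − λ1·Dᵀ s1′(Dv), where s0′ and s1′ are applied elementwise. Then for every v ∈ ℝ^N there exists a constant C(v) ∈ ℝ, not depending on x, such that F^M(x, v) = (1/2)‖ỹ(v) − x‖₂² + λ0·‖x‖₁ + λ1·‖Dx‖₁ + C(v) for all x ∈ ℝ^N. -/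
open Matrix

/-- The first-order difference matrix `D ∈ ℝ^{N×(N+1)}`, with
`(Dx)ᵢ = x_{i+1} − xᵢ` (signal length `N + 1`). -/
def diffMatrix (N : ℕ) : Matrix (Fin N) (Fin (N + 1)) ℝ :=
  Matrix.of fun i j => if j = i.succ then 1 else if j = i.castSucc then -1 else 0

/-- **Completing the square in the majorizer.** With
`sᵢ(x) = φᵢ(x) − |x|`, `φᵢᴹ(x, v) = |x| + sᵢ′(v)(x − v) + sᵢ(v)`,
`Fᴹ(x, v) = ½‖y − x‖₂² + λ0 Σₙ φ0ᴹ(xₙ, vₙ) + λ1 Σₙ φ1ᴹ((Dx)ₙ, (Dv)ₙ)`, and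
`ỹ(v) = y − λ0 s0′(v) − λ1 Dᵀ s1′(Dv)` (derivatives applied elementwise),
for each `v` there is a constant `C(v)`, not depending on `x`, with
`Fᴹ(x, v) = ½‖ỹ(v) − x‖₂² + λ0‖x‖₁ + λ1‖Dx‖₁ + C(v)` for all `x`. -/
theorem cnc_flsa_majorizer_complete_square (N : ℕ) (hN : 1 ≤ N)
    (lam0 lam1 a0 a1 : ℝ) (hlam0 : 0 < lam0) (hlam1 : 0 < lam1)
    (ha0 : 0 ≤ a0) (ha1 : 0 ≤ a1)
    (φ0 φ1 : ℝ → ℝ)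
    (hφ0 : PenaltyAssumption φ0 a0) (hφ1 : PenaltyAssumption φ1 a1)
    (y : Fin (N + 1) → ℝ)
    (s0 s1 : ℝ → ℝ) (hs0 : s0 = fun x => φ0 x - |x|)
    (hs1 : s1 = fun x => φ1 x - |x|)
    (φ0M φ1M : ℝ → ℝ → ℝ)
    (hφ0M : φ0M = fun x v => |x| + deriv s0 v * (x - v) + s0 v)
    (hφ1M : φ1M = fun x v => |x| + deriv s1 v * (x - v) + s1 v)
    (FM : (Fin (N + 1) → ℝ) → (Fin (N + 1) → ℝ) → ℝ)
    (hFM : ∀ x v, FM x v = (1 / 2) * ∑ n, (y n - x n) ^ 2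
      + lam0 * ∑ n, φ0M (x n) (v n)
      + lam1 * ∑ i : Fin N, φ1M ((diffMatrix N *ᵥ x) i) ((diffMatrix N *ᵥ v) i))
    (ytilde : (Fin (N + 1) → ℝ) → (Fin (N + 1) → ℝ))
    (hytilde : ∀ v, ytilde v = fun n => y n - lam0 * deriv s0 (v n)
      - lam1 * ((diffMatrix N)ᵀ *ᵥ (fun i => deriv s1 ((diffMatrix N *ᵥ v) i))) n) :
    ∀ v : Fin (N + 1) → ℝ, ∃ C : ℝ, ∀ x : Fin (N + 1) → ℝ,
      FM x v = (1 / 2) * ∑ n, (ytilde v n - x n) ^ 2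
        + lam0 * ∑ n, |x n|
        + lam1 * ∑ i : Fin N, |(diffMatrix N *ᵥ x) i| + C := by
  intro v
  set D := diffMatrix N with hD
  set w : Fin N → ℝ := fun i => deriv s1 ((D *ᵥ v) i) with hw
  set g : Fin (N + 1) → ℝ :=
    fun n => lam0 * deriv s0 (v n) + lam1 * (Dᵀ *ᵥ w) n with hg
  have hyt : ∀ n, ytilde v n = y n - g n := by
    intro n; rw [hytilde]; simp only [hg, hw]; ring
  have hT : ∀ z : Fin (N + 1) → ℝ,
      ∑ n, (Dᵀ *ᵥ w) n * z n = ∑ i, w i * (D *ᵥ z) i := by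
    intro z
    simp only [Matrix.mulVec, dotProduct, Matrix.transpose_apply,
      Finset.sum_mul, Finset.mul_sum]
    rw [Finset.sum_comm]
    exact Finset.sum_congr rfl fun i _ => Finset.sum_congr rfl fun n _ => by ring
  have hGz : ∀ z : Fin (N + 1) → ℝ,
      ∑ n, g n * z n
        = lam0 * ∑ n, deriv s0 (v n) * z n + lam1 * ∑ i, w i * (D *ᵥ z) i := by
    intro z
    simp only [hg, add_mul, mul_assoc]
    rw [Finset.sum_add_distrib, ← Finset.mul_sum, ← Finset.mul_sum, hT z]
  refine ⟨lam0 * ∑ n, (s0 (v n) - deriv s0 (v n) * v n)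
      + lam1 * ∑ i, (s1 ((D *ᵥ v) i) - deriv s1 ((D *ᵥ v) i) * ((D *ᵥ v) i))
      + ∑ n, g n * y n - (1 / 2) * ∑ n, (g n) ^ 2, fun x => ?_⟩
  rw [hFM]
  simp only [hφ0M, hφ1M]
  have L0 : ∑ n, (|x n| + deriv s0 (v n) * (x n - v n) + s0 (v n))
      = ∑ n, |x n| + ∑ n, deriv s0 (v n) * x n
        + ∑ n, (s0 (v n) - deriv s0 (v n) * v n) := by
    rw [← Finset.sum_add_distrib, ← Finset.sum_add_distrib]
    exact Finset.sum_congr rfl fun n _ => by ring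
  have L1 : ∑ i, (|(D *ᵥ x) i| + deriv s1 ((D *ᵥ v) i) * ((D *ᵥ x) i - (D *ᵥ v) i)
        + s1 ((D *ᵥ v) i))
      = ∑ i, |(D *ᵥ x) i| + ∑ i, w i * (D *ᵥ x) i
        + ∑ i, (s1 ((D *ᵥ v) i) - deriv s1 ((D *ᵥ v) i) * ((D *ᵥ v) i)) := by
    rw [← Finset.sum_add_distrib, ← Finset.sum_add_distrib]
    exact Finset.sum_congr rfl fun i _ => by simp only [hw]; ring
  have R0 : ∑ n, (ytilde v n - x n) ^ 2
      = ∑ n, (y n - x n) ^ 2 - 2 * ∑ n, g n * y n + 2 * ∑ n, g n * x n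
        + ∑ n, (g n) ^ 2 := by
    simp only [hyt]
    have h : ∀ n, (y n - g n - x n) ^ 2
        = ((y n - x n) ^ 2 - 2 * (g n * y n)) + (2 * (g n * x n) + (g n) ^ 2) := by
      intro n; ring
    simp only [h]
    rw [Finset.sum_add_distrib, Finset.sum_add_distrib, Finset.sum_sub_distrib,
      ← Finset.mul_sum, ← Finset.mul_sum]
    ring
  rw [L0, L1, R0, hGz x, hGz y]
  ring
end
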